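/- Let X be a random variable with finite support contained in (−1, ∞) and E[X] > 0. Then there exists b ∈ (0, 1/2] such that E[ln(1 + b·X)] > 0. -/

import Mathlib

/-! Near `b = 0` the expected log-growth `b ↦ ∑ p x * log (1 + b x)` vanishes and has derivative
equal to the mean `∑ p x * x > 0`, so it is positive for all small enough `b > 0`. -/

open Finset Filter Set Topology

theorem HasDerivWithinAt.eventually_lt_nhdsGT {f : ℝ → ℝ} {f' x : ℝ}
    (hf : HasDerivWithinAt f f' (Ioi x) x) (hf' : 0 < f') : ∀ᶠ y in 𝓝[>] x, f x < f y := by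
  have hslope := ((hasDerivWithinAt_iff_tendsto_slope' (lt_irrefl x)).1 hf).eventually
    (eventually_gt_nhds hf')
  filter_upwards [hslope, self_mem_nhdsWithin] with y hy hxy
  exact (slope_pos_iff_of_le (le_of_lt hxy)).1 hy

theorem hasDerivAt_sum_mul_log_one_add_mul (R : Finset ℝ) (p : ℝ → ℝ) :
    HasDerivAt (fun b => ∑ x ∈ R, p x * Real.log (1 + b * x)) (∑ x ∈ R, p x * x) 0 := by
  refine HasDerivAt.fun_sum fun x _ => ?_
  have hlin : HasDerivAt (fun b : ℝ => 1 + b * x) x 0 := by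
    simpa using ((hasDerivAt_id (0 : ℝ)).mul_const x).const_add 1
  simpa using ((hlin.log (by simp)).const_mul (p x))

theorem exists_pos_bet_of_pos_mean_general
    (R : Finset ℝ) (p : ℝ → ℝ)
    (hmean : 0 < ∑ x ∈ R, p x * x) :
    ∃ b ∈ Set.Ioc (0 : ℝ) (1/2), 0 < ∑ x ∈ R, p x * Real.log (1 + b * x) := by
  have hgrowth := (hasDerivAt_sum_mul_log_one_add_mul R p).hasDerivWithinAt.eventually_lt_nhdsGT
    hmean
  obtain ⟨b, hpos, hb⟩ := (hgrowth.and (Ioc_mem_nhdsGT (by norm_num : (0 : ℝ) < 1 / 2))).exists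
  exact ⟨b, hb, by simpa using hpos⟩

/-- If the round return has strictly positive mean (and values `> -1`), then some
bet fraction `b ∈ (0, 1/2]` yields strictly positive expected log-utility. -/
theorem exists_pos_bet_of_pos_mean
    (R : Finset ℝ) (p : ℝ → ℝ)
    (hR : ∀ x ∈ R, -1 < x)
    (hp : ∀ x ∈ R, 0 ≤ p x) (hsum : ∑ x ∈ R, p x = 1)
    (hmean : 0 < ∑ x ∈ R, p x * x) :
    ∃ b ∈ Set.Ioc (0 : ℝ) (1/2), 0 < ∑ x ∈ R, p x * Real.log (1 + b * x) :=
  exists_pos_bet_of_pos_mean_general R p hmean
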